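/- arXiv:0707.2618 — 2 statements merged into one kernel-verified Lean document; each statement's English description precedes it below -/
import Mathlib

section
/- Given real numbers ω_f, ω_b, ω_i (the pre-collision velocity of rod k, post-collision velocity of rod k, and initial velocity of rod k+1), c = cos²β₁ with 0 < c < 1, the system of equations ω_f² = ω_b² + ω_i² and ω_f·c = ω_b·c + ω_i, with ω_i ≠ 0, has the unique solution ω_i = f₊·ω_f and ω_b = ω_i/f₋, where f₊ = 2/(c + 1/c) and f₋ = 2/(c - 1/c). -/
/-! Since `c (ωf - ωb) = ωi`, the energy equation `(ωf - ωb)(ωf + ωb) = ωi²` becomes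
`ωi (ωf + ωb) = c ωi²`, and cancelling `ωi ≠ 0` gives `ωf + ωb = c ωi`. Together with
`ωf - ωb = ωi / c` this is a linear system whose solution is
`2 ωf = (c + 1/c) ωi` and `2 ωb = (c - 1/c) ωi`. -/

section Collision

variable {K : Type*} [Field K] {c ωf ωb ωi : K}

theorem add_eq_mul_of_energy_momentum (hωi : ωi ≠ 0) (henergy : ωf ^ 2 = ωb ^ 2 + ωi ^ 2)
    (hmomentum : ωf * c = ωb * c + ωi) : ωf + ωb = c * ωi :=
  mul_left_cancel₀ hωi <| by linear_combination c * henergy - (ωf + ωb) * hmomentum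

theorem two_mul_eq_of_energy_momentum (hc : c ≠ 0) (hωi : ωi ≠ 0)
    (henergy : ωf ^ 2 = ωb ^ 2 + ωi ^ 2) (hmomentum : ωf * c = ωb * c + ωi) :
    2 * ωf = (c + 1 / c) * ωi ∧ 2 * ωb = (c - 1 / c) * ωi := by
  have hsum := add_eq_mul_of_energy_momentum hωi henergy hmomentum
  have hdiff : ωf - ωb = ωi / c := by
    rw [eq_div_iff hc]
    linear_combination hmomentum
  constructor
  · linear_combination hsum + hdiff
  · linear_combination hsum - hdiff

end Collision

theorem collision_solution_general (c ωf ωb ωi : ℝ) (hc0 : 0 < c)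
    (hωi : ωi ≠ 0)
    (henergy : ωf ^ 2 = ωb ^ 2 + ωi ^ 2)
    (hmomentum : ωf * c = ωb * c + ωi) :
    ωi = (2 / (c + 1 / c)) * ωf ∧ ωb = ωi / (2 / (c - 1 / c)) := by
  obtain ⟨hf, hb⟩ := two_mul_eq_of_energy_momentum hc0.ne' hωi henergy hmomentum
  have hpos : 0 < c + 1 / c := by positivity
  constructor
  · rw [div_mul_eq_mul_div, eq_div_iff hpos.ne', hf, mul_comm]
  · rw [div_div_eq_mul_div, eq_div_iff two_ne_zero]
    linear_combination hb

theorem collision_solution (c ωf ωb ωi : ℝ) (hc0 : 0 < c) (hc1 : c < 1)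
    (hωi : ωi ≠ 0)
    (henergy : ωf ^ 2 = ωb ^ 2 + ωi ^ 2)
    (hmomentum : ωf * c = ωb * c + ωi) :
    ωi = (2 / (c + 1 / c)) * ωf ∧ ωb = ωi / (2 / (c - 1 / c)) :=
  collision_solution_general c ωf ωb ωi hc0 hωi henergy hmomentum
end

section
/- The complete elliptic integral of the first kind K(k) = ∫₀^{π/2} dt/√(1 - k²sin²t) tends to +∞ as k → 1⁻; more precisely, K(k) - ln(4/√(1-k²)) → 0 as k → 1⁻. -/
/-!
Split the integrand as `sin t / Δ + (1 - sin t) / Δ` with `Δ = √(1 - k² sin² t)`. The first part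
has the elementary antiderivative `-log (k cos t + Δ) / k`, so its integral is
`artanh k / k = log ((1 + k) / k') / k`, which differs from `log (4 / k')` by `-log 2 + o(1)`
because `(1 - k) log (1 - k) → 0`. The second part is bounded by `1` and converges to
`∫ cos t / (1 + sin t) = log 2` by dominated convergence.
-/

open Real Filter Topology Set MeasureTheory intervalIntegral

noncomputable def completeEllipticK (k : ℝ) : ℝ :=
  ∫ t in (0:ℝ)..(π / 2), 1 / √(1 - k ^ 2 * sin t ^ 2)

section

variable {k : ℝ}

lemma one_sub_sq_mul_sin_sq_pos (hk : k ^ 2 < 1) (t : ℝ) : 0 < 1 - k ^ 2 * sin t ^ 2 := by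
  nlinarith [sin_sq_le_one t, sq_nonneg k]

lemma Continuous.div_sqrt_one_sub_sq_mul_sin_sq {f : ℝ → ℝ} (hf : Continuous f) (hk : k ^ 2 < 1) :
    Continuous fun t => f t / √(1 - k ^ 2 * sin t ^ 2) :=
  hf.div (by fun_prop) fun t => (sqrt_pos.2 (one_sub_sq_mul_sin_sq_pos hk t)).ne'

lemma abs_mul_cos_lt_sqrt_one_sub_sq_mul_sin_sq (hk : k ^ 2 < 1) (t : ℝ) :
    |k * cos t| < √(1 - k ^ 2 * sin t ^ 2) := by
  rw [← sqrt_sq_eq_abs]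
  exact sqrt_lt_sqrt (sq_nonneg _) (by nlinarith [sin_sq_add_cos_sq t, sq_nonneg (cos t)])

lemma hasDerivAt_log_mul_cos_add_sqrt (hk : k ^ 2 < 1) (t : ℝ) :
    HasDerivAt (fun t => log (k * cos t + √(1 - k ^ 2 * sin t ^ 2)))
      (-(k * sin t) / √(1 - k ^ 2 * sin t ^ 2)) t := by
  have hu := one_sub_sq_mul_sin_sq_pos hk t
  have hpos : 0 < k * cos t + √(1 - k ^ 2 * sin t ^ 2) := by
    linarith [neg_abs_le (k * cos t), abs_mul_cos_lt_sqrt_one_sub_sq_mul_sin_sq hk t]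
  have hsqrt : HasDerivAt (fun t => √(1 - k ^ 2 * sin t ^ 2))
      (-(k ^ 2 * (2 * sin t * cos t)) / (2 * √(1 - k ^ 2 * sin t ^ 2))) t := by
    refine HasDerivAt.sqrt ?_ hu.ne'
    simpa using (((hasDerivAt_sin t).pow 2).const_mul (k ^ 2)).const_sub 1
  refine (((hasDerivAt_cos t).const_mul k).add hsqrt).log hpos.ne' |>.congr_deriv ?_
  simp only [Pi.add_apply]
  field_simp
  ring

lemma integral_sin_div_sqrt_one_sub_sq_mul_sin_sq (hk0 : k ≠ 0) (hk : k ^ 2 < 1) :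
    ∫ t in (0:ℝ)..(π / 2), sin t / √(1 - k ^ 2 * sin t ^ 2) =
      (log (1 + k) - log √(1 - k ^ 2)) / k := by
  rw [integral_eq_sub_of_hasDerivAt (f := fun t => -log (k * cos t + √(1 - k ^ 2 * sin t ^ 2)) / k)
    (fun t _ => ((hasDerivAt_log_mul_cos_add_sqrt hk t).neg.div_const k).congr_deriv (by
      field_simp))
    ((continuous_sin.div_sqrt_one_sub_sq_mul_sin_sq hk).intervalIntegrable _ _)]
  norm_num [add_comm k]
  ring

lemma one_sub_div_sqrt_one_sub_sq_mul_sq_le_one {s : ℝ} (hk : k ^ 2 ≤ 1) (hs0 : 0 ≤ s)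
    (hs1 : s ≤ 1) : (1 - s) / √(1 - k ^ 2 * s ^ 2) ≤ 1 := by
  refine div_le_one_of_le₀ ?_ (sqrt_nonneg _)
  rw [← sqrt_sq (sub_nonneg.2 hs1)]
  exact sqrt_le_sqrt (by nlinarith [mul_le_mul_of_nonneg_right hk (sq_nonneg s)])

lemma one_sub_sin_div_sqrt_one_sub_sin_sq {t : ℝ} (ht : t ∈ Icc 0 (π / 2)) :
    (1 - sin t) / √(1 - 1 ^ 2 * sin t ^ 2) = cos t / (1 + sin t) := by
  have hsin : 0 ≤ sin t := sin_nonneg_of_nonneg_of_le_pi ht.1 (by linarith [ht.2, pi_pos])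
  rw [one_pow, one_mul, ← cos_eq_sqrt_one_sub_sin_sq (by linarith [ht.1, pi_pos]) ht.2]
  rcases eq_or_ne (cos t) 0 with hcos | hcos
  · simp [hcos]
  · rw [div_eq_div_iff hcos (by linarith)]
    nlinarith [sin_sq_add_cos_sq t]

lemma integral_cos_div_one_add_sin : ∫ t in (0:ℝ)..(π / 2), cos t / (1 + sin t) = log 2 := by
  have hpos : ∀ t ∈ uIcc 0 (π / 2), 0 < 1 + sin t := fun t ht => by
    rw [uIcc_of_le (by positivity)] at ht
    linarith [sin_nonneg_of_nonneg_of_le_pi ht.1 (by linarith [ht.2, pi_pos])]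
  rw [integral_eq_sub_of_hasDerivAt (f := fun t => log (1 + sin t))
    (fun t ht => ((hasDerivAt_sin t).const_add 1).log (hpos t ht).ne')
    (ContinuousOn.intervalIntegrable (continuous_cos.continuousOn.div (by fun_prop)
      fun t ht => (hpos t ht).ne'))]
  norm_num

lemma tendsto_integral_one_sub_sin_div_sqrt :
    Tendsto (fun k => ∫ t in (0:ℝ)..(π / 2), (1 - sin t) / √(1 - k ^ 2 * sin t ^ 2))
      (𝓝[<] 1) (𝓝 (log 2)) := by
  have hk : ∀ᶠ k : ℝ in 𝓝[<] 1, k ∈ Ioo 0 1 := Ioo_mem_nhdsLT one_pos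
  rw [← integral_cos_div_one_add_sin]
  refine tendsto_integral_filter_of_dominated_convergence (fun _ => 1) ?_ ?_
    intervalIntegrable_const (ae_of_all _ fun t ht => ?_)
  · filter_upwards [hk] with k hk
    have hk2 : k ^ 2 < 1 := by nlinarith [hk.1, hk.2]
    exact ((continuous_const.sub continuous_sin).div_sqrt_one_sub_sq_mul_sin_sq
      hk2).aestronglyMeasurable
  · filter_upwards [hk] with k hk
    refine ae_of_all _ fun t ht => ?_
    rw [uIoc_of_le (by positivity)] at ht
    have hsin : 0 ≤ sin t := sin_nonneg_of_nonneg_of_le_pi ht.1.le (by linarith [ht.2, pi_pos])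
    rw [norm_of_nonneg (div_nonneg (by linarith [sin_le_one t]) (sqrt_nonneg _))]
    exact one_sub_div_sqrt_one_sub_sq_mul_sq_le_one (by nlinarith [hk.1, hk.2]) hsin (sin_le_one t)
  · rw [uIoc_of_le (by positivity)] at ht
    rw [← one_sub_sin_div_sqrt_one_sub_sin_sq (Ioc_subset_Icc_self ht)]
    rcases eq_or_ne (sin t) 1 with hsin | hsin
    · simp [hsin]
    refine ContinuousAt.tendsto ?_ |>.mono_left nhdsWithin_le_nhds
    refine continuousAt_const.div (by fun_prop) (sqrt_pos.2 ?_).ne'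
    have hsin0 : 0 ≤ sin t := sin_nonneg_of_nonneg_of_le_pi ht.1.le (by linarith [ht.2, pi_pos])
    nlinarith [(sin_le_one t).lt_of_ne hsin]

lemma log_sqrt_one_sub_sq (hk : k ∈ Ioo (-1) 1) :
    log √(1 - k ^ 2) = (log (1 - k) + log (1 + k)) / 2 := by
  rw [log_sqrt (by nlinarith [hk.1, hk.2]), show 1 - k ^ 2 = (1 - k) * (1 + k) by ring,
    log_mul (by linarith [hk.2]) (by linarith [hk.1])]

lemma tendsto_log_four_div_sqrt_one_sub_sq :
    Tendsto (fun k => log (4 / √(1 - k ^ 2))) (𝓝[<] 1) atTop := by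
  have hk : ∀ᶠ k : ℝ in 𝓝[<] 1, k ∈ Ioo (-1) 1 := Ioo_mem_nhdsLT (by norm_num)
  have hsq : Tendsto (fun k : ℝ => 1 - k ^ 2) (𝓝[<] 1) (𝓝[>] 0) := by
    refine tendsto_nhdsWithin_iff.2 ⟨?_, ?_⟩
    · have : ContinuousAt (fun k : ℝ => 1 - k ^ 2) 1 := by fun_prop
      simpa using this.tendsto.mono_left nhdsWithin_le_nhds
    · filter_upwards [hk] with k hk
      exact show 0 < 1 - k ^ 2 by nlinarith [hk.1, hk.2]
  have hlog := tendsto_atTop_add_const_left _ (log 4)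
    (tendsto_neg_atBot_atTop.comp ((tendsto_log_nhdsGT_zero.comp hsq).atBot_div_const two_pos))
  refine hlog.congr' ?_
  filter_upwards [hk] with k hk
  rw [log_div (by norm_num) (sqrt_pos.2 (by nlinarith [hk.1, hk.2])).ne',
    log_sqrt (by nlinarith [hk.1, hk.2])]
  simp only [Function.comp_apply]
  ring

lemma tendsto_log_one_add_sub_log_sqrt_div_sub_log_four_div_sqrt :
    Tendsto (fun k => (log (1 + k) - log √(1 - k ^ 2)) / k - log (4 / √(1 - k ^ 2)))
      (𝓝[<] 1) (𝓝 (-log 2)) := by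
  set g : ℝ → ℝ := fun k => (1 + k) / (2 * k) * log (1 + k) - log 4 - (1 - k) * log (1 - k) / (2 * k)
  have hg : ContinuousAt g 1 := by
    have hlog : ContinuousAt (fun k : ℝ => log (1 + k)) 1 :=
      (continuousAt_log (by norm_num)).comp (by fun_prop)
    have hmul_log : ContinuousAt (fun k : ℝ => (1 - k) * log (1 - k)) 1 :=
      (continuous_mul_log.comp (continuous_const.sub continuous_id)).continuousAt
    fun_prop (disch := norm_num)
  have hg1 : g 1 = -log 2 := by
    simp only [g, show (4 : ℝ) = 2 ^ 2 by norm_num, log_pow]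
    norm_num
    ring
  refine hg1 ▸ (hg.tendsto.mono_left nhdsWithin_le_nhds).congr' ?_
  filter_upwards [Ioo_mem_nhdsLT one_pos] with k hk
  have hk' : k ∈ Ioo (-1) 1 := ⟨by linarith [hk.1], hk.2⟩
  have hk0 : k ≠ 0 := hk.1.ne'
  rw [log_div (by norm_num) (sqrt_pos.2 (by nlinarith [hk.1, hk.2])).ne', log_sqrt_one_sub_sq hk']
  simp only [g]
  field_simp
  ring

lemma completeEllipticK_eq (hk0 : k ≠ 0) (hk : k ^ 2 < 1) :
    completeEllipticK k = (log (1 + k) - log √(1 - k ^ 2)) / k +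
      ∫ t in (0:ℝ)..(π / 2), (1 - sin t) / √(1 - k ^ 2 * sin t ^ 2) := by
  rw [← integral_sin_div_sqrt_one_sub_sq_mul_sin_sq hk0 hk, ← integral_add
    ((continuous_sin.div_sqrt_one_sub_sq_mul_sin_sq hk).intervalIntegrable _ _)
    (((by fun_prop : Continuous fun t => 1 - sin t)
      |>.div_sqrt_one_sub_sq_mul_sin_sq hk).intervalIntegrable _ _)]
  simp only [completeEllipticK, ← add_div, add_sub_cancel]

lemma tendsto_completeEllipticK_sub_log :
    Tendsto (fun k => completeEllipticK k - log (4 / √(1 - k ^ 2))) (𝓝[<] 1) (𝓝 0) := by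
  have hlim := tendsto_log_one_add_sub_log_sqrt_div_sub_log_four_div_sqrt.add
    tendsto_integral_one_sub_sin_div_sqrt
  rw [neg_add_cancel] at hlim
  refine hlim.congr' ?_
  filter_upwards [Ioo_mem_nhdsLT one_pos] with k hk
  rw [completeEllipticK_eq hk.1.ne' (by nlinarith [hk.1, hk.2])]
  ring

lemma tendsto_completeEllipticK_atTop : Tendsto completeEllipticK (𝓝[<] 1) atTop := by
  simpa using tendsto_completeEllipticK_sub_log.add_atTop tendsto_log_four_div_sqrt_one_sub_sq

end

open Real Filter in
theorem complete_elliptic_log_asymptotic :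
    Tendsto (fun k : ℝ => ∫ t in (0:ℝ)..(π / 2), 1 / Real.sqrt (1 - k ^ 2 * Real.sin t ^ 2))
      (nhdsWithin 1 (Set.Iio 1)) atTop ∧
    Tendsto (fun k : ℝ =>
        (∫ t in (0:ℝ)..(π / 2), 1 / Real.sqrt (1 - k ^ 2 * Real.sin t ^ 2)) -
          Real.log (4 / Real.sqrt (1 - k ^ 2)))
      (nhdsWithin 1 (Set.Iio 1)) (nhds 0) :=
  ⟨tendsto_completeEllipticK_atTop, tendsto_completeEllipticK_sub_log⟩
end
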